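/- Let (A,Ω,α) be a Hom-pre-Lie algebra and let Ω_t^1 = Ω + tω_1 and Ω_t^2 = Ω + tω_2 be two equivalent linear deformations, via T_t = Id + tN. Then ω_2(x,y) − ω_1(x,y) = N(x)·y + x·N(y) − N(x·y) for all x,y ∈ A; in particular ω_2 − ω_1 = ∂_reg(N∘α) is exact, so ω_1 and ω_2 define the same class in the second cohomology group H^2(A;A) of (A,Ω,α) with coefficients in the regular representation. -/
import Mathlib


/-- A Hom-pre-Lie algebra structure on `A`: a bilinear product and an algebra
morphism `α` satisfying the Hom-pre-Lie identity. -/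
def IsHomPreLie {K A : Type*} [Field K] [AddCommGroup A] [Module K A]
    (mul : A →ₗ[K] A →ₗ[K] A) (α : A →ₗ[K] A) : Prop :=
  (∀ x y, α (mul x y) = mul (α x) (α y)) ∧
  (∀ x y z, mul (mul x y) (α z) - mul (α x) (mul y z)
      = mul (mul y x) (α z) - mul (α y) (mul x z))

/-- If a vector-valued quadratic polynomial vanishes at three distinct points,
its constant term vanishes. -/
lemma aux_poly_vanish {K A : Type*} [Field K] [AddCommGroup A] [Module K A]
    {b c d : A} {t1 t2 t3 : K}
    (h12 : t1 ≠ t2) (h13 : t1 ≠ t3) (h23 : t2 ≠ t3)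
    (h1 : b + t1 • c + (t1 * t1) • d = 0)
    (h2 : b + t2 • c + (t2 * t2) • d = 0)
    (h3 : b + t3 • c + (t3 * t3) • d = 0) : b = 0 := by
  have e12 : (t1 - t2) • (c + (t1 + t2) • d) = 0 := by
    linear_combination (norm := module) h1 - h2
  have e13 : (t1 - t3) • (c + (t1 + t3) • d) = 0 := by
    linear_combination (norm := module) h1 - h3
  have c12 := (smul_eq_zero.mp e12).resolve_left (sub_ne_zero.mpr h12)
  have c13 := (smul_eq_zero.mp e13).resolve_left (sub_ne_zero.mpr h13)
  have e23 : (t2 - t3) • d = 0 := by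
    linear_combination (norm := module) c12 - c13
  have hd : d = 0 := (smul_eq_zero.mp e23).resolve_left (sub_ne_zero.mpr h23)
  have hc : c = 0 := by rw [hd] at c12; simpa using c12
  rw [hd, hc] at h1; simpa using h1

/-- Let `(A,Ω,α)` be a Hom-pre-Lie algebra (over an infinite
field) and let `Ω_t¹ = Ω + tω₁`, `Ω_t² = Ω + tω₂` be two equivalent linear
deformations, via `T_t = Id + tN`.  Then
`ω₂(x,y) − ω₁(x,y) = N(x)·y + x·N(y) − N(x·y)`; in particular
`ω₂ − ω₁ = ∂_reg(N∘α)` is exact, so `ω₁` and `ω₂` define the same class in the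
second cohomology group with coefficients in the regular representation. -/
theorem equivalent_deformations_cohomologous
    {K A : Type*} [Field K] [Infinite K] [AddCommGroup A] [Module K A]
    (mul : A →ₗ[K] A →ₗ[K] A) (α : A ≃ₗ[K] A)
    (hA : IsHomPreLie mul (α : A →ₗ[K] A))
    (ω₁ ω₂ : A →ₗ[K] A →ₗ[K] A)
    (hω₁ : ∀ x y, α (ω₁ x y) = ω₁ (α x) (α y))
    (hω₂ : ∀ x y, α (ω₂ x y) = ω₂ (α x) (α y))
    (hdef₁ : ∀ t : K, IsHomPreLie (mul + t • ω₁) (α : A →ₗ[K] A))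
    (hdef₂ : ∀ t : K, IsHomPreLie (mul + t • ω₂) (α : A →ₗ[K] A))
    (N : A →ₗ[K] A)
    -- `T_t = Id + tN` is a Hom-pre-Lie algebra homomorphism from `(A,Ω_t²,α)`
    -- to `(A,Ω_t¹,α)` for all `t`:
    (hT : ∀ t : K,
      (∀ x, ((LinearMap.id : A →ₗ[K] A) + t • N) (α x) = α (((LinearMap.id : A →ₗ[K] A) + t • N) x)) ∧
      (∀ x y, ((LinearMap.id : A →ₗ[K] A) + t • N) ((mul + t • ω₂) x y)
        = (mul + t • ω₁) (((LinearMap.id : A →ₗ[K] A) + t • N) x) (((LinearMap.id : A →ₗ[K] A) + t • N) y))) :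
    (∀ x y, ω₂ x y - ω₁ x y = mul (N x) y + mul x (N y) - N (mul x y)) ∧
    -- in particular `ω₂ − ω₁ = ∂_reg(N ∘ α)` is an exact 2-cochain, where
    -- `∂_reg` is the coboundary with coefficients in the regular representation
    -- `(A, α, L, R)`, `(∂_reg g)(x,y) = x·g(α⁻¹y) + g(α⁻¹x)·y − α(g(α⁻²x·α⁻²y))`:
    (∀ x y, ω₂ x y - ω₁ x y
        = mul x ((N ∘ₗ (α : A →ₗ[K] A)) (α.symm y))
          + mul ((N ∘ₗ (α : A →ₗ[K] A)) (α.symm x)) y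
          - α ((N ∘ₗ (α : A →ₗ[K] A))
              (mul (α.symm (α.symm x)) (α.symm (α.symm y))))) := by
  classical
  -- `N` commutes with `α`:
  have hcomm : ∀ x : A, N (α x) = α (N x) := by
    intro x
    have h := (hT 1).1 x
    simp only [LinearMap.add_apply, LinearMap.smul_apply, LinearMap.id_coe, id_eq,
      one_smul, map_add] at h
    exact add_left_cancel h
  -- The polynomial identity coming from the homomorphism property:
  have key : ∀ (x y : A) (t : K),
      t • ((ω₂ x y + N (mul x y) - ω₁ x y - mul x (N y) - mul (N x) y)
        + t • (N (ω₂ x y) - mul (N x) (N y) - ω₁ x (N y) - ω₁ (N x) y)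
        + (t * t) • (-(ω₁ (N x) (N y)))) = 0 := by
    intro x y t
    have h := (hT t).2 x y
    simp only [LinearMap.add_apply, LinearMap.smul_apply, map_add, map_smul,
      LinearMap.id_coe, id_eq] at h
    linear_combination (norm := module) h
  -- three distinct nonzero scalars
  obtain ⟨t1, ht1⟩ := Infinite.exists_notMem_finset ({0} : Finset K)
  obtain ⟨t2, ht2⟩ := Infinite.exists_notMem_finset ({0, t1} : Finset K)
  obtain ⟨t3, ht3⟩ := Infinite.exists_notMem_finset ({0, t1, t2} : Finset K)
  simp only [Finset.mem_insert, Finset.mem_singleton, not_or] at ht1 ht2 ht3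
  have main : ∀ x y, ω₂ x y - ω₁ x y = mul (N x) y + mul x (N y) - N (mul x y) := by
    intro x y
    have e : ∀ t : K, t ≠ 0 →
        (ω₂ x y + N (mul x y) - ω₁ x y - mul x (N y) - mul (N x) y)
          + t • (N (ω₂ x y) - mul (N x) (N y) - ω₁ x (N y) - ω₁ (N x) y)
          + (t * t) • (-(ω₁ (N x) (N y))) = 0 := fun t ht =>
      (smul_eq_zero.mp (key x y t)).resolve_left ht
    have hb := aux_poly_vanish (b := ω₂ x y + N (mul x y) - ω₁ x y - mul x (N y) - mul (N x) y)
      (fun h => ht2.2 h.symm) (fun h => ht3.2.1 h.symm) (fun h => ht3.2.2 h.symm)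
      (e t1 ht1) (e t2 ht2.1) (e t3 ht3.1)
    linear_combination (norm := module) hb
  refine ⟨main, fun x y => ?_⟩
  have h1 : (N ∘ₗ (α : A →ₗ[K] A)) (α.symm y) = N y := by simp
  have h2 : (N ∘ₗ (α : A →ₗ[K] A)) (α.symm x) = N x := by simp
  have h3 : α ((N ∘ₗ (α : A →ₗ[K] A)) (mul (α.symm (α.symm x)) (α.symm (α.symm y))))
      = N (mul x y) := by
    have hm : (α : A →ₗ[K] A) (mul (α.symm (α.symm x)) (α.symm (α.symm y)))
        = mul (α.symm x) (α.symm y) := by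
      rw [hA.1]; simp
    have hm2 : (α : A →ₗ[K] A) (mul (α.symm x) (α.symm y)) = mul x y := by
      rw [hA.1]; simp
    calc α ((N ∘ₗ (α : A →ₗ[K] A)) (mul (α.symm (α.symm x)) (α.symm (α.symm y))))
        = α (N (mul (α.symm x) (α.symm y))) := by
          simp only [LinearMap.comp_apply]
          rw [show ((α : A →ₗ[K] A) (mul (α.symm (α.symm x)) (α.symm (α.symm y))))
            = mul (α.symm x) (α.symm y) from hm]
      _ = N (α (mul (α.symm x) (α.symm y))) := (hcomm _).symm
      _ = N (mul x y) := by rw [show (α (mul (α.symm x) (α.symm y)) : A) = mul x y from hm2]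
  rw [h1, h2, h3, main x y]
  abel
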